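/- The hypersequent J = (⇒p // ⇒□(¬□□p ∧ ¬□□q) // ⇒q) is valid on all reflexive and symmetric Kripke frames (B-frames). -/
import Mathlib


inductive Fm where
  | atom : ℕ → Fm
  | neg : Fm → Fm
  | and : Fm → Fm → Fm
  | or : Fm → Fm → Fm
  | box : Fm → Fm
deriving DecidableEq

/-- Classical Kripke satisfaction. -/
def Sat {W : Type} (R : W → W → Prop) (v : W → ℕ → Prop) : Fm → W → Prop
  | .atom n, x => v x n
  | .neg φ, x => ¬ Sat R v φ x
  | .and φ ψ, x => Sat R v φ x ∧ Sat R v ψ x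
  | .or φ ψ, x => Sat R v φ x ∨ Sat R v ψ x
  | .box φ, x => ∀ y, R x y → Sat R v φ y

/-- A sequent is a pair of finite sets of formulas. -/
abbrev HSeq := Finset Fm × Finset Fm
/-- A hypersequent is a finite list of sequents. -/
abbrev Hyp := List HSeq

/-- A point refutes a sequent: all antecedent formulas true, all succedent formulas false. -/
def Refutes {W : Type} (R : W → W → Prop) (v : W → ℕ → Prop) (S : HSeq) (w : W) : Prop :=
  (∀ φ ∈ S.1, Sat R v φ w) ∧ (∀ φ ∈ S.2, ¬ Sat R v φ w)

/-- A branch of R-related points starting at `w` countermodels the hypersequent. -/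
def Counter {W : Type} (R : W → W → Prop) (v : W → ℕ → Prop) : Hyp → W → Prop
  | [], _ => True
  | [S], w => Refutes R v S w
  | S :: S' :: rest, w => Refutes R v S w ∧ ∃ w', R w w' ∧ Counter R v (S' :: rest) w'

/-- □(¬□□p ∧ ¬□□q), with p = atom 0, q = atom 1. -/
def JFm : Fm :=
  .box (.and (.neg (.box (.box (.atom 0)))) (.neg (.box (.box (.atom 1)))))

/-- The hypersequent J = (⇒p // ⇒□(¬□□p ∧ ¬□□q) // ⇒q). -/
def J : Hyp := [(∅, {Fm.atom 0}), (∅, {JFm}), (∅, {Fm.atom 1})]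

/-- The hypersequent J = (⇒p // ⇒□(¬□□p ∧ ¬□□q) // ⇒q) is valid on
all reflexive symmetric Kripke frames (B-frames): it has no countermodel. -/
theorem J_valid_B :
    ∀ (W : Type) (R : W → W → Prop) (v : W → ℕ → Prop),
      (∀ x, R x x) → (∀ x y, R x y → R y x) →
      ∀ w : W, ¬ Counter R v J w := by
  intro W R v hrefl hsym w hc
  obtain ⟨⟨_, hw⟩, w1, hww1, ⟨_, hw1⟩, w2, hw12, _, hw2⟩ := hc
  have hp : ¬ Sat R v (.atom 0) w := hw _ (Finset.mem_singleton_self _)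
  have hq : ¬ Sat R v (.atom 1) w2 := hw2 _ (Finset.mem_singleton_self _)
  have hJ : ¬ Sat R v JFm w1 := hw1 _ (Finset.mem_singleton_self _)
  rw [JFm, show ∀ φ x, Sat R v (.box φ) x = ∀ y, R x y → Sat R v φ y from fun _ _ => rfl,
    not_forall] at hJ
  obtain ⟨y, hy⟩ := hJ
  rw [Classical.not_imp] at hy
  obtain ⟨hy, h⟩ := hy
  have h' : Sat R v (.box (.box (.atom 0))) y ∨ Sat R v (.box (.box (.atom 1))) y := by
    by_contra hk
    push_neg at hk
    exact h ⟨hk.1, hk.2⟩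
  rcases h' with hbb | hbb
  · exact hp (hbb w1 (hsym _ _ hy) w (hsym _ _ hww1))
  · exact hq (hbb w1 (hsym _ _ hy) w2 hw12)
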